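/- Let T ≥ 1, X = {0,1,…,T}, and S := X × {0,1}. Consider the deterministic right-shift transition q_{z,x} = 1 if x = min(z+1, T) and q_{z,x} = 0 otherwise, the cost Φ(x, μ) = μ(x), and the initial distribution ν_0 with ν_0(0,1) = 1 and ν_0(x,a) = 0 otherwise. For a policy p = (p_n)_{n=0,…,T} with p_n : X → [0,1] and p_T ≡ 1, define the trajectory ν_{n+1} = F̄(ν_n, p_n) and the cost J(p) := Σ_{n=0}^{T} Σ_{x∈X} ν_n(x,1) (ν_n)_X(x) p_n(x). Then the optimal value is inf_p J(p) = (T+2)/(2(T+1)), and it is attained by the policy p_n(x) = 1/(T+1−n) for n < T. -/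

import Mathlib

/-!
The "towards the uniform" example: states `X = {0,…,T}`, deterministic right shift
with absorbing boundary at `T`, cost `Φ(x,μ) = μ(x)`, all mass initially at state
`0` (alive). The optimal value is `(T+2)/(2(T+1))`, attained by the policy
`p_n(x) = 1/(T+1−n)`.
-/

namespace TowardsUniform

/-- Deterministic right-shift transition on `{0,…,T}` with absorbing boundary:
`q_{z,x} = 1` if `x = min(z+1, T)`, else `0`. -/
def q (T : ℕ) (z x : Fin (T + 1)) : ℝ := if x.val = min (z.val + 1) T then 1 else 0

/-- First marginal `ν_X(x) = ν(x,0) + ν(x,1)` (`false` = stopped, `true` = alive). -/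
def margX {T : ℕ} (ν : Fin (T + 1) × Bool → ℝ) (x : Fin (T + 1)) : ℝ :=
  ν (x, false) + ν (x, true)

/-- The mean-field transition `F̄(ν,h)`. -/
def Fbar {T : ℕ} (ν : Fin (T + 1) × Bool → ℝ) (h : Fin (T + 1) → ℝ) :
    Fin (T + 1) × Bool → ℝ
  | (x, false) => ν (x, false) + ν (x, true) * h x
  | (x, true) => ∑ z, ν (z, true) * q T z x * (1 - h z)

/-- Trajectory under the policy `p`, started from the initial distribution `ν_0`
with `ν_0(0,1) = 1` and `ν_0(x,a) = 0` otherwise. -/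
def traj {T : ℕ} (p : ℕ → Fin (T + 1) → ℝ) : ℕ → Fin (T + 1) × Bool → ℝ
  | 0 => fun s => if s = ((0 : Fin (T + 1)), true) then 1 else 0
  | n + 1 => Fbar (traj p n) (p n)

/-- The total cost `J(p) = Σ_{n=0}^{T} Σ_x ν_n(x,1) (ν_n)_X(x) p_n(x)`
(the cost function is `Φ(x,μ) = μ(x)`). -/
def J {T : ℕ} (p : ℕ → Fin (T + 1) → ℝ) : ℝ :=
  ∑ n ∈ Finset.range (T + 1),
    ∑ x, (traj p n) (x, true) * margX (traj p n) x * p n x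

/-- A policy: stopping probabilities in `[0,1]` on `{0,…,T}` with `p_T ≡ 1`. -/
def IsPolicy (T : ℕ) (p : ℕ → Fin (T + 1) → ℝ) : Prop :=
  (∀ n ≤ T, ∀ x, p n x ∈ Set.Icc (0 : ℝ) 1) ∧ ∀ x, p T x = 1

/-- The (state-independent) policy `p_n(x) = 1/(T+1−n)`. -/
noncomputable def pstar (T : ℕ) : ℕ → Fin (T + 1) → ℝ :=
  fun n _ => 1 / ((T : ℝ) + 1 - (n : ℝ))

/-!
Under the shift dynamics the alive mass `mₙ` sits at state `n` at time `n`, and states `≥ n`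
carry no stopped mass yet, so the cost of stopping at time `n` is `mₙ uₙ`, where
`uₙ = mₙ pₙ(n)` is the mass stopping then. From `mₙ₊₁ = mₙ - uₙ` we get
`2 mₙ uₙ = mₙ² - mₙ₊₁² + uₙ²`; since `p_T ≡ 1` empties the system, telescoping gives
`2 J(p) = 1 + Σ uₙ²` with `Σ uₙ = 1`. By Cauchy–Schwarz `Σ uₙ² ≥ 1/(T+1)`, with equality
exactly when every `uₙ = 1/(T+1)`, which is what `pstar` achieves.
-/

theorem sum_range_of_succ_eq_sub {M : Type*} [AddCommGroup M] {m u : ℕ → M}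
    (h : ∀ n, m (n + 1) = m n - u n) (N : ℕ) :
    ∑ n ∈ Finset.range N, u n = m 0 - m N := by
  rw [← Finset.sum_range_sub']
  exact Finset.sum_congr rfl fun n _ => by rw [h, sub_sub_cancel]

theorem two_mul_sum_range_mul_of_succ_eq_sub {R : Type*} [CommRing R] {m u : ℕ → R}
    (h : ∀ n, m (n + 1) = m n - u n) (N : ℕ) :
    2 * ∑ n ∈ Finset.range N, m n * u n =
      m 0 ^ 2 - m N ^ 2 + ∑ n ∈ Finset.range N, u n ^ 2 := by
  induction N with
  | zero => simp
  | succ N ih =>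
    rw [Finset.sum_range_succ, Finset.sum_range_succ, mul_add, ih, h]
    ring

section Trajectory

variable {T : ℕ} (p : ℕ → Fin (T + 1) → ℝ)

-- `Fin.ofNat` reduces modulo `T + 1`; only times `n ≤ T` are ever used.
def aliveMass : ℕ → ℝ
  | 0 => 1
  | n + 1 => aliveMass n * (1 - p n (Fin.ofNat (T + 1) n))

def stopMass (n : ℕ) : ℝ := aliveMass p n * p n (Fin.ofNat (T + 1) n)

lemma aliveMass_succ (n : ℕ) : aliveMass p (n + 1) = aliveMass p n - stopMass p n := by
  rw [aliveMass, stopMass]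
  ring

lemma ofNat_eq_mk {n : ℕ} (hn : n < T + 1) : Fin.ofNat (T + 1) n = ⟨n, hn⟩ :=
  Fin.ext (Nat.mod_eq_of_lt hn)

lemma q_of_lt {n : ℕ} (hn : n < T) (x : Fin (T + 1)) :
    q T ⟨n, by omega⟩ x = if (x : ℕ) = n + 1 then 1 else 0 := by
  rw [q, min_eq_left hn]

lemma traj_alive {n : ℕ} (hn : n ≤ T) (x : Fin (T + 1)) :
    traj p n (x, true) = if (x : ℕ) = n then aliveMass p n else 0 := by
  induction n generalizing x with
  | zero =>
    simp only [traj, aliveMass, Prod.mk.injEq, and_true, Fin.ext_iff, Fin.val_zero]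
  | succ n ih =>
    rw [traj, Fbar, Fintype.sum_eq_single ⟨n, by omega⟩, ih (by omega), if_pos rfl,
      q_of_lt (by omega), aliveMass, ofNat_eq_mk (by omega)]
    · split_ifs <;> ring
    · intro z hz
      rw [ih (by omega), if_neg (fun h => hz (Fin.ext h)), zero_mul, zero_mul]

lemma traj_stopped {n : ℕ} (hn : n ≤ T) (x : Fin (T + 1)) (hx : n ≤ x) :
    traj p n (x, false) = 0 := by
  induction n with
  | zero => simp [traj]
  | succ n ih =>
    rw [traj, Fbar, ih (by omega) (by omega), traj_alive p (by omega), if_neg (by omega)]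
    ring

lemma J_eq_sum_aliveMass_mul_stopMass :
    J p = ∑ n ∈ Finset.range (T + 1), aliveMass p n * stopMass p n := by
  refine Finset.sum_congr rfl fun n hn => ?_
  have hn : n < T + 1 := Finset.mem_range.mp hn
  rw [Fintype.sum_eq_single ⟨n, hn⟩, margX, traj_alive p (by omega), if_pos rfl,
    traj_stopped p (by omega) ⟨n, hn⟩ le_rfl, stopMass, ofNat_eq_mk hn]
  · ring
  · intro x hx
    rw [traj_alive p (by omega), if_neg (fun h => hx (Fin.ext h)), zero_mul, zero_mul]

end Trajectory

section Cost

variable {T : ℕ} {p : ℕ → Fin (T + 1) → ℝ}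

lemma aliveMass_of_last_eq_one (hp : ∀ x, p T x = 1) : aliveMass p (T + 1) = 0 := by
  rw [aliveMass, hp, sub_self, mul_zero]

lemma sum_stopMass (hp : ∀ x, p T x = 1) :
    ∑ n ∈ Finset.range (T + 1), stopMass p n = 1 := by
  rw [sum_range_of_succ_eq_sub (aliveMass_succ p), aliveMass_of_last_eq_one hp, aliveMass,
    sub_zero]

lemma two_mul_J (hp : ∀ x, p T x = 1) :
    2 * J p = 1 + ∑ n ∈ Finset.range (T + 1), stopMass p n ^ 2 := by
  rw [J_eq_sum_aliveMass_mul_stopMass, two_mul_sum_range_mul_of_succ_eq_sub (aliveMass_succ p),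
    aliveMass_of_last_eq_one hp, aliveMass]
  ring

lemma le_J (hp : ∀ x, p T x = 1) : ((T : ℝ) + 2) / (2 * ((T : ℝ) + 1)) ≤ J p := by
  have hcs := sq_sum_le_card_mul_sum_sq (s := Finset.range (T + 1)) (f := stopMass p)
  rw [sum_stopMass hp, Finset.card_range, Nat.cast_succ, one_pow] at hcs
  have hJ := two_mul_J hp
  rw [div_le_iff₀ (by positivity)]
  linear_combination hcs - ((T : ℝ) + 1) * hJ

end Cost

section OptimalPolicy

variable (T : ℕ)

lemma aliveMass_pstar {n : ℕ} (hn : n ≤ T + 1) :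
    aliveMass (pstar T) n = ((T : ℝ) + 1 - n) / ((T : ℝ) + 1) := by
  induction n with
  | zero => rw [aliveMass, Nat.cast_zero, sub_zero, div_self (by positivity)]
  | succ n ih =>
    have hpos : (0 : ℝ) < T + 1 - n := by
      have : (n : ℝ) ≤ T := by exact_mod_cast (show n ≤ T by omega)
      linarith
    rw [aliveMass, ih (by omega), pstar]
    push_cast
    field_simp
    ring

lemma stopMass_pstar {n : ℕ} (hn : n ≤ T) : stopMass (pstar T) n = 1 / ((T : ℝ) + 1) := by
  have hpos : (0 : ℝ) < T + 1 - n := by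
    have : (n : ℝ) ≤ T := by exact_mod_cast hn
    linarith
  rw [stopMass, aliveMass_pstar T (by omega), pstar]
  field_simp

lemma isPolicy_pstar : IsPolicy T (pstar T) := by
  refine ⟨fun n hn x => ?_, fun x => by simp [pstar]⟩
  have : (n : ℝ) ≤ T := by exact_mod_cast hn
  rw [pstar, Set.mem_Icc, div_le_one (by linarith)]
  exact ⟨div_nonneg zero_le_one (by linarith), by linarith⟩

lemma J_pstar : J (pstar T) = ((T : ℝ) + 2) / (2 * ((T : ℝ) + 1)) := by
  have hJ := two_mul_J (isPolicy_pstar T).2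
  rw [Finset.sum_congr rfl fun n hn => by
    rw [stopMass_pstar T (Nat.lt_succ_iff.mp (Finset.mem_range.mp hn))],
    Finset.sum_const, Finset.card_range, nsmul_eq_mul] at hJ
  push_cast at hJ
  field_simp at hJ ⊢
  linarith

end OptimalPolicy

theorem optimal_value_general (T : ℕ) :
    sInf {r | ∃ p : ℕ → Fin (T + 1) → ℝ, IsPolicy T p ∧ J p = r} =
        ((T : ℝ) + 2) / (2 * ((T : ℝ) + 1)) ∧
      IsPolicy T (pstar T) ∧
      J (pstar T) = ((T : ℝ) + 2) / (2 * ((T : ℝ) + 1)) := by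
  refine ⟨IsLeast.csInf_eq ⟨⟨pstar T, isPolicy_pstar T, J_pstar T⟩, ?_⟩,
    isPolicy_pstar T, J_pstar T⟩
  rintro r ⟨p, hp, rfl⟩
  exact le_J hp.2

/-- **Towards the uniform**: the optimal value equals `(T+2)/(2(T+1))` and is
attained by the policy `p_n(x) = 1/(T+1−n)`. -/
theorem optimal_value (T : ℕ) (hT : 1 ≤ T) :
    sInf {r | ∃ p : ℕ → Fin (T + 1) → ℝ, IsPolicy T p ∧ J p = r} =
        ((T : ℝ) + 2) / (2 * ((T : ℝ) + 1)) ∧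
      IsPolicy T (pstar T) ∧
      J (pstar T) = ((T : ℝ) + 2) / (2 * ((T : ℝ) + 1)) :=
  optimal_value_general T

end TowardsUniform
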